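/- arXiv:1807.03449 — 2 statements merged into one kernel-verified Lean document; each statement's English description precedes it below -/
import Mathlib

section
/- Let Ω be a bounded Lipschitz domain in ℝ^N and let ω ∈ L¹(Ω) satisfy ω ≥ 0 a.e. in Ω and ∫_Ω ω dx = 1. Then there exists a nonnegative function ξ ∈ C(Ω̄) that vanishes on the boundary ∂Ω and satisfies ∫_Ω (log|ξ|) ω dx = 0. -/
open MeasureTheory Metric Set Filter Topology
open scoped ENNReal NNReal

noncomputable section

/-- Euclidean space ℝ^N. -/
abbrev Euc (N : ℕ) := EuclideanSpace ℝ (Fin N)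

variable {N : ℕ}

/-- Distance to the boundary of `Ω`. -/
def distBdry (Ω : Set (Euc N)) (x : Euc N) : ℝ := Metric.infDist x (frontier Ω)

/-- The β-Hölder seminorm `|u|_β` of `u` over the closure of `Ω`. -/
def holderSemi (β : ℝ) (Ω : Set (Euc N)) (u : Euc N → ℝ) : ℝ :=
  sSup {q : ℝ | ∃ x ∈ closure Ω, ∃ y ∈ closure Ω, x ≠ y ∧ q = |u x - u y| / dist x y ^ β}

/-- Membership in `C_0^{0,β}(closure Ω)`: β-Hölder continuous on the closure of `Ω`
and vanishing on the boundary `∂Ω`. -/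
def MemC0Holder (β : ℝ) (Ω : Set (Euc N)) (u : Euc N → ℝ) : Prop :=
  (∃ C : ℝ, ∀ x ∈ closure Ω, ∀ y ∈ closure Ω, |u x - u y| ≤ C * dist x y ^ β) ∧
  (∀ x ∈ frontier Ω, u x = 0)

/-- The p-th power `[u]_{s,p}^p` of the Gagliardo seminorm. -/
def gagliardo (N : ℕ) (s p : ℝ) (u : Euc N → ℝ) : ℝ≥0∞ :=
  ∫⁻ x : Euc N, ∫⁻ y : Euc N,
    ENNReal.ofReal (|u x - u y| ^ p / dist x y ^ ((N : ℝ) + s * p))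

/-- Membership in the fractional Sobolev space `W_0^{s,p}(Ω)`. -/
def MemW0 (s p : ℝ) (Ω : Set (Euc N)) (u : Euc N → ℝ) : Prop :=
  MemLp u (ENNReal.ofReal p) volume ∧ (∀ᵐ x : Euc N, x ∉ Ω → u x = 0) ∧
  gagliardo N s p u < ⊤

/-- `∫_Ω (log|u|)⁺ ω dx` as an extended nonnegative real. -/
def logIntPos (Ω : Set (Euc N)) (ω u : Euc N → ℝ) : ℝ≥0∞ :=
  ∫⁻ x in Ω, ENNReal.ofReal (ω x) * ENNReal.ofReal (Real.log |u x|)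

/-- `∫_Ω (log|u|)⁻ ω dx` as an extended nonnegative real,
with the convention `log 0 = -∞`. -/
def logIntNeg (Ω : Set (Euc N)) (ω u : Euc N → ℝ) : ℝ≥0∞ :=
  ∫⁻ x in Ω, ENNReal.ofReal (ω x) *
    (if u x = 0 then ⊤ else ENNReal.ofReal (-Real.log |u x|))

/-- The extended-real integral `∫_Ω (log|u|) ω dx` (which may equal `-∞`). -/
def logInt (Ω : Set (Euc N)) (ω u : Euc N → ℝ) : EReal :=
  (logIntPos Ω ω u : EReal) - (logIntNeg Ω ω u : EReal)

/-- The exponential map `EReal → ℝ≥0∞`, with `exp (-∞) = 0` and `exp ∞ = ∞`. -/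
def expE (x : EReal) : ℝ≥0∞ :=
  if x = ⊥ then 0 else if x = ⊤ then ⊤ else ENNReal.ofReal (Real.exp x.toReal)

/-- `k(u) := exp (∫_Ω (log|u|) ω dx)`. -/
def kval (Ω : Set (Euc N)) (ω u : Euc N → ℝ) : ℝ≥0∞ := expE (logInt Ω ω u)

/-- `Λ_p := inf { [u]_{s,p}^p : u ∈ M_p }` where
`M_p = {u ∈ W_0^{s,p}(Ω) : ∫_Ω (log|u|) ω dx = 0}`. -/
def LambdaP (N : ℕ) (s p : ℝ) (Ω : Set (Euc N)) (ω : Euc N → ℝ) : ℝ≥0∞ :=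
  sInf {Λ : ℝ≥0∞ | ∃ u : Euc N → ℝ,
    MemW0 s p Ω u ∧ logInt Ω ω u = 0 ∧ Λ = gagliardo N s p u}

/-- Membership in `M_s := {u ∈ C_0^{0,s}(closure Ω) : k(u) = 1}`. -/
def MemMs (s : ℝ) (Ω : Set (Euc N)) (ω u : Euc N → ℝ) : Prop :=
  MemC0Holder s Ω u ∧ kval Ω ω u = 1

/-- `μ_s := inf {|u|_s : u ∈ M_s}`. -/
def muS (s : ℝ) (Ω : Set (Euc N)) (ω : Euc N → ℝ) : ℝ :=
  sInf {m : ℝ | ∃ u : Euc N → ℝ, MemMs s Ω ω u ∧ m = holderSemi s Ω u}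

/-- `K_ε := ess sup_{0 ≤ t ≤ ε} ∫_{δ^{-1}{t}} ω dH_{N-1}`. -/
def Keps (N : ℕ) (Ω : Set (Euc N)) (ω : Euc N → ℝ) (ε : ℝ) : ℝ≥0∞ :=
  essSup (fun t : ℝ =>
      ∫⁻ x in distBdry Ω ⁻¹' {t}, ENNReal.ofReal (ω x)
        ∂(MeasureTheory.Measure.hausdorffMeasure ((N : ℝ) - 1)))
    (volume.restrict (Icc (0 : ℝ) ε))

/-- `u` is a weak solution of `(-Δ_p)^s u = Λ u⁻¹ ω` in `Ω`. -/
def IsWeakSolution (N : ℕ) (s p : ℝ) (Ω : Set (Euc N)) (ω : Euc N → ℝ) (Λ : ℝ)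
    (u : Euc N → ℝ) : Prop :=
  ∀ φ : Euc N → ℝ, MemW0 s p Ω φ →
    (∫ x : Euc N, ∫ y : Euc N,
        |u x - u y| ^ (p - 2) * (u x - u y) * (φ x - φ y) / dist x y ^ ((N : ℝ) + s * p))
      = Λ * ∫ x in Ω, (u x)⁻¹ * φ x * ω x

/-- `(L_∞^+ u)(x) := sup_{y ≠ x} (u(y)-u(x))/|y-x|^s`. -/
def Lplus (s : ℝ) (u : Euc N → ℝ) (x : Euc N) : ℝ :=
  ⨆ y : {y : Euc N // y ≠ x}, (u y.1 - u x) / dist y.1 x ^ s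

/-- `(L_∞^- u)(x) := inf_{y ≠ x} (u(y)-u(x))/|y-x|^s`. -/
def Lminus (s : ℝ) (u : Euc N → ℝ) (x : Euc N) : ℝ :=
  ⨅ y : {y : Euc N // y ≠ x}, (u y.1 - u x) / dist y.1 x ^ s

/-- `u` is a viscosity supersolution of `L u = 0` in `Ω`. -/
def IsViscSupersol (Ω : Set (Euc N)) (L : (Euc N → ℝ) → Euc N → ℝ)
    (u : Euc N → ℝ) : Prop :=
  ∀ x₀ ∈ Ω, ∀ φ : Euc N → ℝ, ContDiff ℝ 1 φ → HasCompactSupport φ →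
    φ x₀ = u x₀ → (∀ x, φ x ≤ u x) → L φ x₀ ≤ 0

/-- `u` is a viscosity subsolution of `L u = 0` in `Ω`. -/
def IsViscSubsol (Ω : Set (Euc N)) (L : (Euc N → ℝ) → Euc N → ℝ)
    (u : Euc N → ℝ) : Prop :=
  ∀ x₀ ∈ Ω, ∀ φ : Euc N → ℝ, ContDiff ℝ 1 φ → HasCompactSupport φ →
    φ x₀ = u x₀ → (∀ x, u x ≤ φ x) → 0 ≤ L φ x₀

/-! Let `ν = ω dx` on `Ω` and let `d` be continuous, vanishing exactly on `∂Ω`. Choose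
`ε k ↓ 0` with `ν {d < ε k} ≤ 2⁻ᵏ` and put `ξ₀ = ∑ₖ 2⁻ᵏ min(1, d / ε k)`. Where `ε n ≤ d` we
have `2⁻ⁿ ≤ ξ₀ ≤ 2`, so `|log ξ₀| ≤ log 2 · (1 + #{k | d < ε k})`, whose `ν`-integral is at most
`log 2 · (1 + ∑ₖ 2⁻ᵏ) < ∞`. Thus `log ξ₀ ∈ L¹(ν)`, and `ξ = e^{-∫ log ξ₀ dν} ξ₀` is normalized. -/

def dyadicProfile (ε : ℕ → ℝ) (t : ℝ) : ℝ :=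
  ∑' k : ℕ, (1 / 2 : ℝ) ^ k * max 0 (min 1 (t / ε k))

namespace dyadicProfile

lemma term_nonneg (ε : ℕ → ℝ) (t : ℝ) (k : ℕ) :
    0 ≤ (1 / 2 : ℝ) ^ k * max 0 (min 1 (t / ε k)) := by
  positivity

lemma term_le (ε : ℕ → ℝ) (t : ℝ) (k : ℕ) :
    (1 / 2 : ℝ) ^ k * max 0 (min 1 (t / ε k)) ≤ (1 / 2) ^ k :=
  mul_le_of_le_one_right (by positivity) (max_le zero_le_one (min_le_left _ _))

lemma summable (ε : ℕ → ℝ) (t : ℝ) :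
    Summable fun k ↦ (1 / 2 : ℝ) ^ k * max 0 (min 1 (t / ε k)) :=
  summable_geometric_two.of_nonneg_of_le (term_nonneg ε t) (term_le ε t)

end dyadicProfile

open dyadicProfile

section DyadicProfile

variable {ε : ℕ → ℝ} {t : ℝ}

lemma continuous_dyadicProfile (ε : ℕ → ℝ) : Continuous (dyadicProfile ε) :=
  continuous_tsum (fun k ↦ by fun_prop) summable_geometric_two fun k t ↦ by
    rw [Real.norm_of_nonneg (term_nonneg ε t k)]; exact term_le ε t k

lemma dyadicProfile_nonneg (ε : ℕ → ℝ) (t : ℝ) : 0 ≤ dyadicProfile ε t :=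
  tsum_nonneg (term_nonneg ε t)

lemma dyadicProfile_le_two (ε : ℕ → ℝ) (t : ℝ) : dyadicProfile ε t ≤ 2 :=
  tsum_geometric_two ▸ (summable ε t).tsum_le_tsum (term_le ε t) summable_geometric_two

@[simp]
lemma dyadicProfile_zero (ε : ℕ → ℝ) : dyadicProfile ε 0 = 0 := by
  simp [dyadicProfile]

lemma pow_le_dyadicProfile {k : ℕ} (hε : 0 < ε k) (ht : ε k ≤ t) :
    (1 / 2 : ℝ) ^ k ≤ dyadicProfile ε t := by
  have hterm : (1 / 2 : ℝ) ^ k * max 0 (min 1 (t / ε k)) = (1 / 2) ^ k := by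
    rw [min_eq_left ((one_le_div hε).2 ht), max_eq_right zero_le_one, mul_one]
  exact hterm ▸ (summable ε t).le_tsum k fun j _ ↦ term_nonneg ε t j

lemma dyadicProfile_pos (hε : ∀ k, 0 < ε k) (hε0 : Tendsto ε atTop (𝓝 0)) (ht : 0 < t) :
    0 < dyadicProfile ε t := by
  obtain ⟨k, hk⟩ := (hε0.eventually (gt_mem_nhds ht)).exists
  exact (by positivity : (0 : ℝ) < (1 / 2) ^ k).trans_le (pow_le_dyadicProfile (hε k) hk.le)

lemma abs_log_dyadicProfile_le {n : ℕ} (hε : 0 < ε n) (ht : ε n ≤ t) :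
    |Real.log (dyadicProfile ε t)| ≤ Real.log 2 * (n + 1) := by
  have hlow := pow_le_dyadicProfile hε ht
  have hlog2 : 0 ≤ Real.log 2 := Real.log_nonneg one_le_two
  have hlog_low : -(n * Real.log 2) ≤ Real.log (dyadicProfile ε t) := by
    calc -(n * Real.log 2) = Real.log ((1 / 2 : ℝ) ^ n) := by
          rw [Real.log_pow, one_div, Real.log_inv]; ring
      _ ≤ _ := Real.log_le_log (by positivity) hlow
  have hlog_up : Real.log (dyadicProfile ε t) ≤ Real.log 2 :=
    Real.log_le_log ((by positivity : (0 : ℝ) < (1 / 2) ^ n).trans_le hlow)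
      (dyadicProfile_le_two ε t)
  rw [abs_le]
  constructor <;> nlinarith [(Nat.cast_nonneg n : (0 : ℝ) ≤ n)]

end DyadicProfile

section Measure

variable {X : Type*} [MeasurableSpace X] (μ : Measure X)

lemma exists_pos_tendsto_zero_measure_lt_le [IsFiniteMeasure μ] {f : X → ℝ} (hf : Measurable f)
    (h0 : μ {x | f x ≤ 0} = 0) {δ : ℕ → ℝ≥0∞} (hδ : ∀ k, 0 < δ k) :
    ∃ ε : ℕ → ℝ, (∀ k, 0 < ε k) ∧ Tendsto ε atTop (𝓝 0) ∧ ∀ k, μ {x | f x < ε k} ≤ δ k := by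
  have hlim : Tendsto (fun r ↦ μ {x | f x < r}) (𝓝[>] 0) (𝓝 0) := by
    have hinter : ⋂ r > (0 : ℝ), {x | f x < r} = {x | f x ≤ 0} := by
      ext x
      simp only [mem_iInter, mem_ofPred_eq]
      exact ⟨fun h ↦ not_lt.1 fun hpos ↦ (h _ hpos).false, fun h r hr ↦ h.trans_lt hr⟩
    have := tendsto_measure_biInter_gt (μ := μ) (a := (0 : ℝ))
      (fun r _ ↦ (measurableSet_lt hf measurable_const).nullMeasurableSet)
      (fun i j _ hij x (hx : f x < i) ↦ hx.trans_le hij) ⟨1, one_pos, measure_ne_top _ _⟩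
    rwa [hinter, h0] at this
  have hchoice : ∀ k : ℕ, ∃ r : ℝ, 0 < r ∧ r < 1 / (k + 1) ∧ μ {x | f x < r} ≤ δ k := by
    intro k
    obtain ⟨r, hμr, hr⟩ := ((hlim.eventually (gt_mem_nhds (hδ k))).and
      (Ioo_mem_nhdsGT (by positivity : (0 : ℝ) < 1 / (k + 1)))).exists
    exact ⟨r, hr.1, hr.2, hμr.le⟩
  choose ε hε_pos hε_lt hε_meas using hchoice
  refine ⟨ε, hε_pos, ?_, hε_meas⟩
  exact squeeze_zero (fun k ↦ (hε_pos k).le) (fun k ↦ (hε_lt k).le)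
    tendsto_one_div_add_atTop_nhds_zero_nat

lemma integrable_log_dyadicProfile_comp [IsFiniteMeasure μ] {d : X → ℝ} (hd : Measurable d)
    {ε : ℕ → ℝ} (hε : ∀ k, 0 < ε k) (hμε : ∑' k, μ {x | d x < ε k} ≠ ∞) :
    Integrable (fun x ↦ Real.log (dyadicProfile ε (d x))) μ := by
  refine ⟨((continuous_dyadicProfile ε).measurable.comp hd).log.aestronglyMeasurable, ?_⟩
  simp only [HasFiniteIntegral, Real.enorm_eq_ofReal_abs]
  set S : X → ℝ≥0∞ := fun x ↦ ∑' k, {x | d x < ε k}.indicator 1 x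
  have hbound : ∀ᵐ x ∂μ,
      ENNReal.ofReal |Real.log (dyadicProfile ε (d x))| ≤
        ENNReal.ofReal (Real.log 2) * (1 + S x) := by
    -- Borel–Cantelli: almost every `x` lies in only finitely many of the sets `{d < ε k}`.
    filter_upwards [ae_eventually_notMem hμε] with x hx
    have hex : ∃ k, ε k ≤ d x := by
      obtain ⟨k, hk⟩ := hx.exists
      exact ⟨k, not_lt.1 hk⟩
    classical
    set n := Nat.find hex
    have hn_le : (n : ℝ≥0∞) ≤ S x := by
      calc (n : ℝ≥0∞) = ∑ j ∈ Finset.range n, {x | d x < ε j}.indicator 1 x := by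
            rw [Finset.sum_congr rfl fun j hj ↦ indicator_of_mem (show x ∈ {x | d x < ε j} from
              not_le.1 (Nat.find_min hex (Finset.mem_range.1 hj))) _]
            simp [n]
        _ ≤ S x := ENNReal.sum_le_tsum _
    calc ENNReal.ofReal |Real.log (dyadicProfile ε (d x))|
        ≤ ENNReal.ofReal (Real.log 2 * (n + 1)) :=
          ENNReal.ofReal_le_ofReal (abs_log_dyadicProfile_le (hε n) (Nat.find_spec hex))
      _ = ENNReal.ofReal (Real.log 2) * (1 + n) := by
          rw [ENNReal.ofReal_mul (Real.log_nonneg one_le_two), add_comm,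
            ENNReal.ofReal_add zero_le_one n.cast_nonneg, ENNReal.ofReal_one,
            ENNReal.ofReal_natCast]
      _ ≤ ENNReal.ofReal (Real.log 2) * (1 + S x) := by gcongr
  have hS : ∫⁻ x, S x ∂μ = ∑' k, μ {x | d x < ε k} := by
    rw [lintegral_tsum fun k ↦ (measurable_one.indicator
      (measurableSet_lt hd measurable_const)).aemeasurable]
    simp_rw [lintegral_indicator_one (measurableSet_lt hd measurable_const)]
  calc ∫⁻ x, ENNReal.ofReal |Real.log (dyadicProfile ε (d x))| ∂μ
      ≤ ∫⁻ x, ENNReal.ofReal (Real.log 2) * (1 + S x) ∂μ := lintegral_mono_ae hbound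
    _ = ENNReal.ofReal (Real.log 2) * (μ univ + ∑' k, μ {x | d x < ε k}) := by
        rw [lintegral_const_mul' _ _ ENNReal.ofReal_ne_top, lintegral_add_left measurable_const,
          lintegral_const, hS, one_mul]
    _ < ∞ := by finiteness

lemma integrable_mul_of_integrable_withDensity {μ : Measure X} {ω g : X → ℝ}
    (hω : AEMeasurable ω μ) (hω_nn : ∀ᵐ x ∂μ, 0 ≤ ω x)
    (hg : Integrable g (μ.withDensity fun x ↦ ENNReal.ofReal (ω x))) :
    Integrable (fun x ↦ ω x * g x) μ := by
  rw [integrable_withDensity_iff_integrable_smul₀' hω.ennreal_ofReal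
    (ae_of_all _ fun _ ↦ ENNReal.ofReal_lt_top)] at hg
  refine hg.congr ?_
  filter_upwards [hω_nn] with x hx
  simp [ENNReal.toReal_ofReal hx]

end Measure

section LogIntegral

variable {Ω : Set (Euc N)} {ω ξ : Euc N → ℝ}

lemma logInt_eq_integral (hΩ : MeasurableSet Ω) (hω_nn : ∀ᵐ x ∂volume.restrict Ω, 0 ≤ ω x)
    (hξ : ∀ x ∈ Ω, 0 < ξ x) (hint : IntegrableOn (fun x ↦ ω x * Real.log (ξ x)) Ω) :
    logInt Ω ω ξ = ((∫ x in Ω, ω x * Real.log (ξ x) : ℝ) : EReal) := by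
  have hpos : logIntPos Ω ω ξ = ∫⁻ x in Ω, ENNReal.ofReal (ω x * Real.log (ξ x)) := by
    refine lintegral_congr_ae ?_
    filter_upwards [hω_nn, ae_restrict_mem hΩ] with x hωx hx
    rw [abs_of_pos (hξ x hx), ENNReal.ofReal_mul hωx]
  have hneg : logIntNeg Ω ω ξ = ∫⁻ x in Ω, ENNReal.ofReal (-(ω x * Real.log (ξ x))) := by
    refine lintegral_congr_ae ?_
    filter_upwards [hω_nn, ae_restrict_mem hΩ] with x hωx hx
    rw [if_neg (hξ x hx).ne', abs_of_pos (hξ x hx), ← mul_neg, ENNReal.ofReal_mul hωx]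
  have hneg_fin : ∫⁻ x in Ω, ENNReal.ofReal (-(ω x * Real.log (ξ x))) ≠ ∞ :=
    hint.neg.lintegral_lt_top.ne
  rw [logInt, hpos, hneg, integral_eq_lintegral_pos_part_sub_lintegral_neg_part hint,
    EReal.coe_sub, EReal.coe_ennreal_toReal hint.lintegral_lt_top.ne,
    EReal.coe_ennreal_toReal hneg_fin]

lemma logInt_exp_mul (hΩ : MeasurableSet Ω) (hω_int : IntegrableOn ω Ω)
    (hω_nn : ∀ᵐ x ∂volume.restrict Ω, 0 ≤ ω x) (hξ : ∀ x ∈ Ω, 0 < ξ x)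
    (hint : IntegrableOn (fun x ↦ ω x * Real.log (ξ x)) Ω) (c : ℝ) :
    logInt Ω ω (fun x ↦ Real.exp c * ξ x) =
      (((c * ∫ x in Ω, ω x) + ∫ x in Ω, ω x * Real.log (ξ x) : ℝ) : EReal) := by
  have heq : (fun x ↦ ω x * Real.log (Real.exp c * ξ x)) =ᵐ[volume.restrict Ω]
      fun x ↦ c * ω x + ω x * Real.log (ξ x) := by
    filter_upwards [ae_restrict_mem hΩ] with x hx
    rw [Real.log_mul (Real.exp_ne_zero c) (hξ x hx).ne', Real.log_exp]
    ring
  have hint' : IntegrableOn (fun x ↦ c * ω x + ω x * Real.log (ξ x)) Ω :=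
    (hω_int.const_mul c).add hint
  rw [logInt_eq_integral hΩ hω_nn (fun x hx ↦ by have := hξ x hx; positivity)
    (hint'.congr heq.symm), integral_congr_ae heq, integral_add (hω_int.const_mul c) hint,
    integral_const_mul]

end LogIntegral

theorem exists_continuous_logNormalized_general
    (N : ℕ) (Ω : Set (Euc N)) (hΩo : IsOpen Ω)
    (ω : Euc N → ℝ) (hω_int : IntegrableOn ω Ω)
    (hω_nn : ∀ᵐ x ∂volume.restrict Ω, 0 ≤ ω x)
    (hω_norm : ∫ x in Ω, ω x = 1) :
    ∃ ξ : Euc N → ℝ, ContinuousOn ξ (closure Ω) ∧ (∀ x, 0 ≤ ξ x) ∧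
      (∀ x ∈ frontier Ω, ξ x = 0) ∧ logInt Ω ω ξ = 0 := by
  obtain ⟨d, hd_zero, hd_Icc⟩ :=
    (perfectlyNormalSpace_iff_forall_isClosed_preimage_zero (X := Euc N)).1 inferInstance _
      isClosed_frontier
  have hd_pos : ∀ x ∈ Ω, 0 < d x := fun x hx ↦ (hd_Icc x).1.lt_of_ne' fun h ↦
    (hΩo.inter_frontier_eq.subset ⟨hx, hd_zero ▸ h⟩ : x ∈ (∅ : Set (Euc N)))
  set ν := (volume.restrict Ω).withDensity fun x ↦ ENNReal.ofReal (ω x)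
  have : IsFiniteMeasure ν := isFiniteMeasure_withDensity_ofReal hω_int.hasFiniteIntegral
  have hν : ν {x | d x ≤ 0} = 0 := withDensity_absolutelyContinuous _ _ <| by
    rw [Measure.restrict_apply (measurableSet_le d.continuous.measurable measurable_const)]
    convert measure_empty (μ := volume)
    exact eq_empty_of_forall_notMem fun x hx ↦ (hd_pos x hx.2).not_ge hx.1
  obtain ⟨ε, hε_pos, hε_lim, hε_le⟩ := exists_pos_tendsto_zero_measure_lt_le ν
    d.continuous.measurable hν (δ := fun k ↦ 2⁻¹ ^ k)
    fun k ↦ ENNReal.pow_pos (ENNReal.inv_pos.2 ENNReal.ofNat_ne_top) k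
  have hsum : ∑' k, ν {x | d x < ε k} ≠ ∞ :=
    ne_top_of_le_ne_top (by simp [ENNReal.tsum_geometric]) (ENNReal.tsum_le_tsum hε_le)
  set ξ₀ := fun x ↦ dyadicProfile ε (d x)
  have hint : IntegrableOn (fun x ↦ ω x * Real.log (ξ₀ x)) Ω :=
    integrable_mul_of_integrable_withDensity hω_int.aemeasurable hω_nn
      (integrable_log_dyadicProfile_comp ν d.continuous.measurable hε_pos hsum)
  set I := ∫ x in Ω, ω x * Real.log (ξ₀ x)
  refine ⟨fun x ↦ Real.exp (-I) * ξ₀ x,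
    (continuous_const.mul ((continuous_dyadicProfile ε).comp d.continuous)).continuousOn,
    fun x ↦ mul_nonneg (Real.exp_pos _).le (dyadicProfile_nonneg _ _), fun x hx ↦ ?_, ?_⟩
  · rw [hd_zero] at hx
    simp [ξ₀, show d x = 0 from hx]
  · rw [logInt_exp_mul hΩo.measurableSet hω_int hω_nn
      (fun x hx ↦ dyadicProfile_pos hε_pos hε_lim (hd_pos x hx)) hint, hω_norm,
      mul_one, neg_add_cancel, EReal.coe_zero]

/-- For a bounded (Lipschitz) domain `Ω ⊂ ℝ^N` and a normalized nonnegative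
weight `ω ∈ L¹(Ω)`, there is a nonnegative `ξ ∈ C(closure Ω)` vanishing on `∂Ω` with
`∫_Ω (log|ξ|) ω dx = 0` (in the extended-real sense). -/
theorem exists_continuous_logNormalized
    (N : ℕ) (Ω : Set (Euc N)) (hΩo : IsOpen Ω) (hΩb : Bornology.IsBounded Ω)
    (hΩc : IsConnected Ω)
    (ω : Euc N → ℝ) (hω_int : IntegrableOn ω Ω)
    (hω_nn : ∀ᵐ x ∂volume.restrict Ω, 0 ≤ ω x)
    (hω_norm : ∫ x in Ω, ω x = 1) :
    ∃ ξ : Euc N → ℝ, ContinuousOn ξ (closure Ω) ∧ (∀ x, 0 ≤ ξ x) ∧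
      (∀ x ∈ frontier Ω, ξ x = 0) ∧ logInt Ω ω ξ = 0 :=
  exists_continuous_logNormalized_general N Ω hΩo ω hω_int hω_nn hω_norm
end
end

section
/- Let Ω be a bounded Lipschitz domain in ℝ^N and 0 < s < 1. Let u ∈ C_0^{0,s}(Ω̄) be extended as zero outside Ω. If [u]_{s,q} < ∞ for some q > 1, then u ∈ W_0^{s,p}(Ω) for all p ≥ q and lim_{p→∞} [u]_{s,p} = |u|_s. -/
open MeasureTheory Metric Set Filter Topology
open scoped ENNReal NNReal

noncomputable section

variable {N : ℕ}

/-!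
Extended by zero, `u` is `s`-Hölder on all of `ℝ^N` with constant `H = |u|_s`: a segment
leaving `Ω` crosses `∂Ω`, where `u` vanishes. Factoring the Gagliardo integrand through the
Hölder quotient `Q = |u x - u y| / |x - y|^s ≤ H` gives `[u]_{s,p}^p ≤ H^{p-q} [u]_{s,q}^q`.
Conversely, if some quotient exceeds `r`, then by continuity `Q > r` on a product of two small
balls, whence `[u]_{s,p}^p ≥ c r^p`. The `p`-th roots of both bounds tend to `H` and `r`.
-/

theorem IsPreconnected.inter_frontier_nonempty {X : Type*} [TopologicalSpace X] {s t : Set X}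
    (hs : IsPreconnected s) (hst : (s ∩ t).Nonempty) (hsdt : (s \ t).Nonempty) :
    (s ∩ frontier t).Nonempty := by
  by_contra h
  rw [not_nonempty_iff_eq_empty] at h
  have hnf : ∀ z ∈ s, z ∉ frontier t := fun z hz hzf => h.subset ⟨hz, hzf⟩
  obtain ⟨x, hxs, hxt⟩ := hst
  obtain ⟨y, hys, hyt⟩ := hsdt
  have hcover : s ⊆ interior t ∪ (closure t)ᶜ := by
    intro z hz
    by_cases hzt : z ∈ closure t
    · exact Or.inl (not_not.1 fun hzi => hnf z hz ⟨hzt, hzi⟩)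
    · exact Or.inr hzt
  obtain ⟨z, -, hzi, hzc⟩ := hs _ _ isOpen_interior isClosed_closure.isOpen_compl hcover
    ⟨x, hxs, not_not.1 fun hxi => hnf x hxs ⟨subset_closure hxt, hxi⟩⟩
    ⟨y, hys, fun hyc => hnf y hys ⟨hyc, fun hyi => hyt (interior_subset hyi)⟩⟩
  exact hzc (interior_subset_closure hzi)

theorem abs_sub_le_mul_dist_rpow_of_closure {E : Type*} [NormedAddCommGroup E]
    [NormedSpace ℝ E] {Ω : Set E} {u : E → ℝ} {H s : ℝ} (hH : 0 ≤ H) (hs : 0 ≤ s)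
    (hΩ : ∀ x ∈ closure Ω, ∀ y ∈ closure Ω, |u x - u y| ≤ H * dist x y ^ s)
    (hfr : ∀ x ∈ frontier Ω, u x = 0) (hout : ∀ x ∉ Ω, u x = 0) (x y : E) :
    |u x - u y| ≤ H * dist x y ^ s := by
  have hinside : ∀ x ∈ Ω, ∀ y, |u x - u y| ≤ H * dist x y ^ s := by
    intro x hx y
    by_cases hy : y ∈ Ω
    · exact hΩ x (subset_closure hx) y (subset_closure hy)
    obtain ⟨z, hzseg, hzfr⟩ := (convex_segment x y).isPreconnected.inter_frontier_nonempty
      ⟨x, left_mem_segment ℝ x y, hx⟩ ⟨y, right_mem_segment ℝ x y, hy⟩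
    have hxz : dist x z ≤ dist x y := by
      simpa [dist_comm] using segment_subset_closedBall_left x y hzseg
    calc |u x - u y| = |u x - u z| := by rw [hout y hy, hfr z hzfr]
      _ ≤ H * dist x z ^ s := hΩ x (subset_closure hx) z (frontier_subset_closure hzfr)
      _ ≤ H * dist x y ^ s := by gcongr
  by_cases hx : x ∈ Ω
  · exact hinside x hx y
  by_cases hy : y ∈ Ω
  · simpa [abs_sub_comm, dist_comm] using hinside y hy x
  rw [hout x hx, hout y hy, sub_self, abs_zero]
  positivity

theorem continuous_of_abs_sub_le_mul_dist_rpow {X : Type*} [PseudoMetricSpace X] {u : X → ℝ}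
    {H s : ℝ} (hs : 0 < s) (hu : ∀ x y, |u x - u y| ≤ H * dist x y ^ s) : Continuous u := by
  refine continuous_iff_continuousAt.2 fun x => tendsto_iff_dist_tendsto_zero.2 ?_
  have hlim : Tendsto (fun y => H * dist y x ^ s) (𝓝 x) (𝓝 (H * dist x x ^ s)) :=
    ((continuous_id.dist continuous_const).tendsto x).rpow_const (Or.inr hs.le) |>.const_mul H
  rw [dist_self, Real.zero_rpow hs.ne', mul_zero] at hlim
  exact squeeze_zero (fun _ => dist_nonneg) (fun y => hu y x) hlim

theorem exists_ball_ball_lt_div_dist_rpow {X : Type*} [MetricSpace X] {u : X → ℝ}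
    (hu : Continuous u) {s r : ℝ} {a b : X} (hab : a ≠ b)
    (hr : r < |u a - u b| / dist a b ^ s) :
    ∃ ρ > 0, ∀ x ∈ ball a ρ, ∀ y ∈ ball b ρ,
      0 < dist x y ∧ dist x y < dist a b + 1 ∧ r < |u x - u y| / dist x y ^ s := by
  have hd : 0 < dist a b := dist_pos.2 hab
  have hdist : Continuous fun z : X × X => dist z.1 z.2 := continuous_fst.dist continuous_snd
  have hquot : ContinuousAt (fun z : X × X => |u z.1 - u z.2| / dist z.1 z.2 ^ s) (a, b) :=
    ((hu.comp continuous_fst).sub (hu.comp continuous_snd)).abs.continuousAt.div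
      (hdist.continuousAt.rpow_const (Or.inl hd.ne')) (Real.rpow_pos_of_pos hd s).ne'
  obtain ⟨ρ, hρ, hball⟩ := eventually_nhds_iff_ball.1 <|
    (hdist.continuousAt.eventually (lt_mem_nhds hd)).and <|
      (hdist.continuousAt.eventually (gt_mem_nhds (lt_add_one (dist a b)))).and
        (hquot.eventually (lt_mem_nhds hr))
  refine ⟨ρ, hρ, fun x hx y hy => hball (x, y) ?_⟩
  rw [← ball_prod_same]
  exact ⟨hx, hy⟩

theorem mul_measure_mul_le_lintegral_lintegral {α β : Type*} [MeasurableSpace α]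
    [MeasurableSpace β] {μ : Measure α} {ν : Measure β} {A : Set α} {B : Set β}
    (hA : MeasurableSet A) (hB : MeasurableSet B) {f : α → β → ℝ≥0∞} {K : ℝ≥0∞}
    (hK : ∀ x ∈ A, ∀ y ∈ B, K ≤ f x y) :
    K * (μ A * ν B) ≤ ∫⁻ x, ∫⁻ y, f x y ∂ν ∂μ :=
  calc K * (μ A * ν B) = ∫⁻ _ in A, K * ν B ∂μ := by
        rw [setLIntegral_const, mul_right_comm, mul_assoc]
    _ ≤ ∫⁻ x in A, ∫⁻ y in B, f x y ∂ν ∂μ := setLIntegral_mono' hA fun x hx =>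
        (setLIntegral_const B K).symm.trans_le (setLIntegral_mono' hB (hK x hx))
    _ ≤ ∫⁻ x in A, ∫⁻ y, f x y ∂ν ∂μ :=
        lintegral_mono fun x => setLIntegral_le_lintegral _ _
    _ ≤ ∫⁻ x, ∫⁻ y, f x y ∂ν ∂μ := setLIntegral_le_lintegral _ _

theorem tendsto_rpow_sub_mul_rpow_one_div {x c : ℝ} (hx : 0 ≤ x) (hc : 0 < c) (q : ℝ) :
    Tendsto (fun p : ℝ => (x ^ (p - q) * c) ^ (1 / p)) atTop (𝓝 x) := by
  have hexp : Tendsto (fun p : ℝ => (p - q) * (1 / p)) atTop (𝓝 1) := by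
    have h := (tendsto_inv_atTop_zero (𝕜 := ℝ)).const_mul q |>.const_sub 1
    rw [mul_zero, sub_zero] at h
    refine h.congr' ?_
    filter_upwards [eventually_ne_atTop 0] with p hp
    field_simp
  have hinv : Tendsto (fun p : ℝ => 1 / p) atTop (𝓝 0) := by
    simpa only [one_div] using tendsto_inv_atTop_zero
  have hlim := ((tendsto_const_nhds (x := x)).rpow hexp (Or.inr one_pos)).mul
    ((tendsto_const_nhds (x := c)).rpow hinv (Or.inl hc.ne'))
  rw [Real.rpow_one, Real.rpow_zero, mul_one] at hlim
  refine hlim.congr' ?_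
  filter_upwards [eventually_gt_atTop 0] with p hp
  rw [Real.mul_rpow (Real.rpow_nonneg hx _) hc.le, ← Real.rpow_mul hx]

theorem ENNReal.tendsto_ofReal_rpow_sub_mul_rpow_one_div {x c : ℝ} (hx : 0 ≤ x) (hc : 0 < c)
    (q : ℝ) : Tendsto (fun p : ℝ => ENNReal.ofReal (x ^ (p - q) * c) ^ (1 / p)) atTop
      (𝓝 (ENNReal.ofReal x)) := by
  refine (ENNReal.tendsto_ofReal (tendsto_rpow_sub_mul_rpow_one_div hx hc q)).congr' ?_
  filter_upwards [eventually_gt_atTop 0] with p hp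
  rw [ENNReal.ofReal_rpow_of_nonneg (by positivity) (by positivity)]

theorem tendsto_rpow_one_div_of_rpow_bounds {g : ℝ → ℝ≥0∞} {H q C : ℝ} (hH : 0 ≤ H)
    (hC : 0 < C) (hupper : ∀ᶠ p in atTop, g p ≤ ENNReal.ofReal (H ^ (p - q) * C))
    (hlower : ∀ r, 0 < r → r < H →
      ∃ c > 0, ∀ᶠ p in atTop, ENNReal.ofReal (r ^ p * c) ≤ g p) :
    Tendsto (fun p => g p ^ (1 / p)) atTop (𝓝 (ENNReal.ofReal H)) := by
  refine tendsto_order.2 ⟨fun a ha => ?_, fun a ha => ?_⟩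
  · obtain ⟨r, -, har, hrH⟩ := ENNReal.lt_iff_exists_real_btwn.1 ha
    have hr : 0 < r := ENNReal.ofReal_pos.1 (pos_of_gt har)
    obtain ⟨c, hc, hlow⟩ := hlower r hr (ENNReal.ofReal_lt_ofReal_iff'.1 hrH).1
    have hroot := ENNReal.tendsto_ofReal_rpow_sub_mul_rpow_one_div hr.le hc 0
    filter_upwards [hroot.eventually (lt_mem_nhds har), hlow, eventually_gt_atTop 0]
      with p hp hlow hp0
    rw [sub_zero] at hp
    exact hp.trans_le (ENNReal.rpow_le_rpow hlow (by positivity))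
  · have hroot := ENNReal.tendsto_ofReal_rpow_sub_mul_rpow_one_div hH hC q
    filter_upwards [hroot.eventually (gt_mem_nhds ha), hupper, eventually_gt_atTop 0]
      with p hp hup hp0
    exact (ENNReal.rpow_le_rpow hup (by positivity)).trans_lt hp

theorem rpow_div_rpow_add_mul_eq {A d p : ℝ} (hA : 0 ≤ A) (hd : 0 < d) (hp : p ≠ 0)
    (n s q : ℝ) :
    A ^ p / d ^ (n + s * p) = (A / d ^ s) ^ (p - q) * (A ^ q / d ^ (n + s * q)) := by
  rw [Real.div_rpow hA (by positivity), ← Real.rpow_mul hd.le, div_mul_div_comm,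
    ← Real.rpow_add' hA (by rwa [sub_add_cancel]), ← Real.rpow_add hd]
  congr 2 <;> ring

section Holder

variable {β : ℝ} {Ω : Set (Euc N)} {u : Euc N → ℝ}

theorem holderSemi_nonneg : 0 ≤ holderSemi β Ω u :=
  Real.sSup_nonneg fun _ ⟨_, _, _, _, _, hq⟩ => hq ▸ by positivity

theorem exists_lt_div_dist_rpow_of_lt_holderSemi {r : ℝ} (hr0 : 0 ≤ r)
    (hr : r < holderSemi β Ω u) :
    ∃ a ∈ closure Ω, ∃ b ∈ closure Ω, a ≠ b ∧ r < |u a - u b| / dist a b ^ β := by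
  have hne : {q : ℝ | ∃ x ∈ closure Ω, ∃ y ∈ closure Ω, x ≠ y ∧
      q = |u x - u y| / dist x y ^ β}.Nonempty := by
    by_contra h
    rw [not_nonempty_iff_eq_empty] at h
    rw [holderSemi, h, Real.sSup_empty] at hr
    linarith
  obtain ⟨_, ⟨a, ha, b, hb, hab, rfl⟩, hlt⟩ := exists_lt_of_lt_csSup hne hr
  exact ⟨a, ha, b, hb, hab, hlt⟩

theorem MemC0Holder.abs_sub_le_holderSemi_mul_of_mem_closure (hu : MemC0Holder β Ω u)
    {x y : Euc N} (hx : x ∈ closure Ω) (hy : y ∈ closure Ω) :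
    |u x - u y| ≤ holderSemi β Ω u * dist x y ^ β := by
  obtain rfl | hxy := eq_or_ne x y
  · rw [sub_self, abs_zero]
    exact mul_nonneg holderSemi_nonneg (by positivity)
  obtain ⟨C, hC⟩ := hu.1
  rw [← div_le_iff₀ (Real.rpow_pos_of_pos (dist_pos.2 hxy) β)]
  refine le_csSup ⟨max C 0, ?_⟩ ⟨x, hx, y, hy, hxy, rfl⟩
  rintro _ ⟨x, hx, y, hy, hxy, rfl⟩
  rw [div_le_iff₀ (Real.rpow_pos_of_pos (dist_pos.2 hxy) β)]
  exact (hC x hx y hy).trans (by gcongr; exact le_max_left C 0)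

theorem MemC0Holder.abs_sub_le_holderSemi_mul (hu : MemC0Holder β Ω u)
    (hu0 : ∀ x ∉ Ω, u x = 0) (hβ : 0 ≤ β) (x y : Euc N) :
    |u x - u y| ≤ holderSemi β Ω u * dist x y ^ β :=
  abs_sub_le_mul_dist_rpow_of_closure holderSemi_nonneg hβ
    (fun _ hx _ hy => hu.abs_sub_le_holderSemi_mul_of_mem_closure hx hy) hu.2 hu0 x y

end Holder

section Gagliardo

variable {s r : ℝ} {u : Euc N → ℝ}

theorem gagliardo_le_rpow_mul_gagliardo {p q H : ℝ} (hH : 0 ≤ H)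
    (hu : ∀ x y, |u x - u y| ≤ H * dist x y ^ s) (hq : 0 < q) (hqp : q ≤ p) :
    gagliardo N s p u ≤ ENNReal.ofReal (H ^ (p - q)) * gagliardo N s q u := by
  have hp : 0 < p := hq.trans_le hqp
  simp only [gagliardo, ← lintegral_const_mul' _ _ ENNReal.ofReal_ne_top]
  refine lintegral_mono fun x => lintegral_mono fun y => ?_
  rw [← ENNReal.ofReal_mul (by positivity)]
  refine ENNReal.ofReal_le_ofReal ?_
  obtain rfl | hxy := eq_or_ne x y
  · rw [sub_self, abs_zero, Real.zero_rpow hp.ne', zero_div]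
    positivity
  have hd : 0 < dist x y := dist_pos.2 hxy
  have hquot : |u x - u y| / dist x y ^ s ≤ H :=
    (div_le_iff₀ (Real.rpow_pos_of_pos hd s)).2 (hu x y)
  rw [rpow_div_rpow_add_mul_eq (abs_nonneg _) hd hp.ne' _ s q]
  gcongr

theorem exists_pos_rpow_mul_le_gagliardo (hu : Continuous u) {a b : Euc N} (hab : a ≠ b)
    (hr : 0 ≤ r) (hrab : r < |u a - u b| / dist a b ^ s) :
    ∃ c > 0, ∀ p > 0, ENNReal.ofReal (r ^ p * c) ≤ gagliardo N s p u := by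
  obtain ⟨ρ, hρ, hball⟩ := exists_ball_ball_lt_div_dist_rpow hu hab hrab
  set R := dist a b + 1
  set V := volume (ball a ρ) * volume (ball b ρ)
  have hV : V ≠ ⊤ := ENNReal.mul_ne_top measure_ball_lt_top.ne measure_ball_lt_top.ne
  have hV0 : 0 < V.toReal := ENNReal.toReal_pos
    (mul_ne_zero (measure_ball_pos _ _ hρ).ne' (measure_ball_pos _ _ hρ).ne') hV
  have hR : 0 < R := by positivity
  refine ⟨V.toReal / R ^ (N : ℝ), by positivity, fun p hp => ?_⟩
  calc ENNReal.ofReal (r ^ p * (V.toReal / R ^ (N : ℝ)))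
      = ENNReal.ofReal (r ^ p / R ^ (N : ℝ)) * V := by
        rw [← mul_div_assoc, ← div_mul_eq_mul_div, ENNReal.ofReal_mul (by positivity),
          ENNReal.ofReal_toReal hV]
    _ ≤ gagliardo N s p u :=
        mul_measure_mul_le_lintegral_lintegral measurableSet_ball measurableSet_ball
          fun x hx y hy => ?_
  obtain ⟨hxy, hxyR, hrxy⟩ := hball x hx y hy
  refine ENNReal.ofReal_le_ofReal ?_
  rw [rpow_div_rpow_add_mul_eq (abs_nonneg _) hxy hp.ne' _ s 0]
  simp only [sub_zero, Real.rpow_zero, mul_zero, add_zero, mul_one_div]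
  exact div_le_div₀ (by positivity) (Real.rpow_le_rpow hr hrxy.le hp.le) (by positivity)
    (Real.rpow_le_rpow hxy.le hxyR.le (Nat.cast_nonneg N))

end Gagliardo

theorem gagliardo_tendsto_holderSemi_general
    (N : ℕ) (Ω : Set (Euc N)) (hΩb : Bornology.IsBounded Ω)
    (s : ℝ) (hs0 : 0 < s)
    (u : Euc N → ℝ) (hu : MemC0Holder s Ω u) (hu0 : ∀ x ∉ Ω, u x = 0)
    (q : ℝ) (hq : 1 < q) (hq_fin : gagliardo N s q u < ⊤) :
    (∀ p : ℝ, q ≤ p → MemW0 s p Ω u) ∧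
    Tendsto (fun p : ℝ => gagliardo N s p u ^ (1 / p)) atTop
      (𝓝 (ENNReal.ofReal (holderSemi s Ω u))) := by
  set H := holderSemi s Ω u
  have hglobal := hu.abs_sub_le_holderSemi_mul hu0 hs0.le
  have hcont : Continuous u := continuous_of_abs_sub_le_mul_dist_rpow hs0 hglobal
  have hinterp (p : ℝ) (hp : q ≤ p) :
      gagliardo N s p u ≤ ENNReal.ofReal (H ^ (p - q)) * gagliardo N s q u :=
    gagliardo_le_rpow_mul_gagliardo holderSemi_nonneg hglobal (by linarith) hp
  refine ⟨fun p hp => ⟨?_, ae_of_all _ hu0, ?_⟩, ?_⟩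
  · exact hcont.memLp_of_hasCompactSupport <| HasCompactSupport.intro hΩb.isCompact_closure
      fun x hx => hu0 x fun hxΩ => hx (subset_closure hxΩ)
  · exact (hinterp p hp).trans_lt (ENNReal.mul_lt_top ENNReal.ofReal_lt_top hq_fin)
  refine tendsto_rpow_one_div_of_rpow_bounds holderSemi_nonneg
    (q := q) (C := (gagliardo N s q u).toReal + 1) (by positivity) ?_ fun r hr hrH => ?_
  · filter_upwards [eventually_ge_atTop q] with p hp
    rw [ENNReal.ofReal_mul (Real.rpow_nonneg holderSemi_nonneg _)]
    refine (hinterp p hp).trans (mul_le_mul_right ?_ _)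
    exact (ENNReal.le_ofReal_iff_toReal_le hq_fin.ne (by positivity)).2 (lt_add_one _).le
  · obtain ⟨a, -, b, -, hab, hrab⟩ := exists_lt_div_dist_rpow_of_lt_holderSemi hr.le hrH
    obtain ⟨c, hc, hlow⟩ := exists_pos_rpow_mul_le_gagliardo hcont hab hr.le hrab
    exact ⟨c, hc, (eventually_gt_atTop 0).mono hlow⟩

/-- If `u ∈ C_0^{0,s}(closure Ω)`, extended by zero outside `Ω`, has
`[u]_{s,q} < ∞` for some `q > 1`, then `u ∈ W_0^{s,p}(Ω)` for all `p ≥ q` and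
`lim_{p→∞} [u]_{s,p} = |u|_s`. -/
theorem gagliardo_tendsto_holderSemi
    (N : ℕ) (Ω : Set (Euc N)) (hΩo : IsOpen Ω) (hΩb : Bornology.IsBounded Ω)
    (hΩc : IsConnected Ω)
    (s : ℝ) (hs0 : 0 < s) (hs1 : s < 1)
    (u : Euc N → ℝ) (hu : MemC0Holder s Ω u) (hu0 : ∀ x ∉ Ω, u x = 0)
    (q : ℝ) (hq : 1 < q) (hq_fin : gagliardo N s q u < ⊤) :
    (∀ p : ℝ, q ≤ p → MemW0 s p Ω u) ∧
    Tendsto (fun p : ℝ => gagliardo N s p u ^ (1 / p)) atTop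
      (𝓝 (ENNReal.ofReal (holderSemi s Ω u))) :=
  gagliardo_tendsto_holderSemi_general N Ω hΩb s hs0 u hu hu0 q hq hq_fin
end
end
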